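/- Let ε ∈ (-1,1) and κ ∈ ℝ, and let φ be the function on ℝ³ minus closure(W_∞) defined by the contour-integral formula φ(p) = (1/(2π))∫₀^{2π} F(e^{iθ}, u(p,e^{iθ})) dθ. Then for every (X,Y,Z) not in closure(W_∞): φ(-X,Y,Z) = φ(X,Y,Z), φ(X,-Y,Z) = φ(X,Y,Z), and φ(X,Y,-Z) = -φ(X,Y,Z). -/

import Mathlib

noncomputable section

/-- The open region `W∞ = {(X,Y,0) : X²/(1+ε) + Y²/(1-ε) > 1}` in `ℝ³ = ℝ × ℝ × ℝ`
(coordinates `(X, Y, Z)`). -/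
def Winf (ε : ℝ) : Set (ℝ × ℝ × ℝ) :=
  {p | p.2.2 = 0 ∧ 1 < p.1^2/(1+ε) + p.2.1^2/(1-ε)}

/-- The ellipse `Γ = {(X,Y,0) : X²/(1+ε) + Y²/(1-ε) = 1}`. -/
def Gam (ε : ℝ) : Set (ℝ × ℝ × ℝ) :=
  {p | p.2.2 = 0 ∧ p.1^2/(1+ε) + p.2.1^2/(1-ε) = 1}

/-- `u(p,w) = A·w + Z - conj(A)·w⁻¹` where `A = (Y + iX)/2` for `p = (X,Y,Z)`. -/
def uc (p : ℝ × ℝ × ℝ) (w : ℂ) : ℂ :=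
  (((p.2.1 : ℂ) + Complex.I * p.1)/2) * w + (p.2.2 : ℂ)
    - (starRingEnd ℂ) (((p.2.1 : ℂ) + Complex.I * p.1)/2) * w⁻¹

/-- The branch `arctan ζ = (1/(2i))·Log((1+iζ)/(1-iζ))` of the inverse tangent. -/
def arctanC (ζ : ℂ) : ℂ :=
  (2 * Complex.I)⁻¹ * Complex.log ((1 + Complex.I * ζ) / (1 - Complex.I * ζ))

/-- The integrand `F(e^{iθ}, u(p,e^{iθ}))`, using `Q(e^{iθ}) = 1 + ε·cos 2θ > 0` with positive
real powers: `F(w,u) = Q^{-3/2}·(Q+u²)·arctan(u/√Q) + κ·u`. -/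
def Fint (ε κ : ℝ) (p : ℝ × ℝ × ℝ) (θ : ℝ) : ℂ :=
  (((1 + ε * Real.cos (2*θ)) ^ (-(3:ℝ)/2) : ℝ) : ℂ) *
      (((1 + ε * Real.cos (2*θ) : ℝ) : ℂ) + (uc p (Complex.exp (Complex.I * θ)))^2) *
      arctanC (uc p (Complex.exp (Complex.I * θ)) /
        ((Real.sqrt (1 + ε * Real.cos (2*θ)) : ℝ) : ℂ)) +
    (κ : ℂ) * uc p (Complex.exp (Complex.I * θ))

/-- `φ(p) = (1/(2π))·∫₀^{2π} F(e^{iθ}, u(p,e^{iθ})) dθ`. -/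
def phi (ε κ : ℝ) (p : ℝ × ℝ × ℝ) : ℂ :=
  ((1/(2*Real.pi) : ℝ) : ℂ) * ∫ θ in (0:ℝ)..(2*Real.pi), Fint ε κ p θ

end

noncomputable section Aux

/-- closed form of `F` as a function of `Z`, `t = X cos θ + Y sin θ` and `q = 1 + ε cos 2θ`. -/
def G (κ Z t q : ℝ) : ℂ :=
  ((q ^ (-(3:ℝ)/2) : ℝ) : ℂ) * (((q : ℝ) : ℂ) + ((Z : ℂ) + Complex.I * ((t : ℝ) : ℂ))^2) *
      arctanC (((Z : ℂ) + Complex.I * ((t : ℝ) : ℂ)) / ((Real.sqrt q : ℝ) : ℂ)) +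
    (κ : ℂ) * ((Z : ℂ) + Complex.I * ((t : ℝ) : ℂ))

lemma uc_exp (X Y Z θ : ℝ) :
    uc (X, Y, Z) (Complex.exp (Complex.I * θ)) =
      (Z : ℂ) + Complex.I * ((X * Real.cos θ + Y * Real.sin θ : ℝ) : ℂ) := by
  have h1 : Complex.exp (Complex.I * θ) = (Real.cos θ : ℂ) + (Real.sin θ : ℂ) * Complex.I := by
    rw [mul_comm, Complex.exp_mul_I, ← Complex.ofReal_cos, ← Complex.ofReal_sin]
  have h2 : (Complex.exp (Complex.I * θ))⁻¹ = (Real.cos θ : ℂ) - (Real.sin θ : ℂ) * Complex.I := by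
    rw [← Complex.exp_neg]
    have h3 : -(Complex.I * θ) = ((-θ : ℝ) : ℂ) * Complex.I := by push_cast; ring
    rw [h3, Complex.exp_mul_I, ← Complex.ofReal_cos, ← Complex.ofReal_sin, Real.cos_neg,
      Real.sin_neg]
    push_cast; ring
  simp only [uc]
  rw [h2, h1]
  simp only [map_div₀, map_add, map_mul, Complex.conj_I, Complex.conj_ofReal, map_ofNat]
  push_cast
  ring_nf

lemma Fint_eq (ε κ X Y Z θ : ℝ) :
    Fint ε κ (X, Y, Z) θ =
      G κ Z (X * Real.cos θ + Y * Real.sin θ) (1 + ε * Real.cos (2*θ)) := by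
  simp only [Fint, G, uc_exp]

/-- The key branch lemma: oddness of `arctanC` on arguments avoiding the cuts. -/
lemma arctanC_neg (Z t s : ℝ) (hs : 0 < s) (hc : Z ≠ 0 ∨ t^2 ≤ s^2) :
    arctanC (-(((Z : ℂ) + Complex.I * (t : ℂ)) / (s : ℂ))) =
      -arctanC (((Z : ℂ) + Complex.I * (t : ℂ)) / (s : ℂ)) := by
  set ζ : ℂ := ((Z : ℂ) + Complex.I * (t : ℂ)) / (s : ℂ) with hζ
  have hsC : (s : ℂ) ≠ 0 := Complex.ofReal_ne_zero.mpr hs.ne'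
  have hN : 1 + Complex.I * (-ζ) = 1 - Complex.I * ζ := by ring
  have hD : 1 - Complex.I * (-ζ) = 1 + Complex.I * ζ := by ring
  have hNval : 1 + Complex.I * ζ = (((s - t : ℝ) : ℂ) + Complex.I * (Z : ℂ)) / (s : ℂ) := by
    rw [hζ]
    field_simp
    push_cast
    linear_combination (t : ℂ) * Complex.I_sq
  have hDval : 1 - Complex.I * ζ = (((s + t : ℝ) : ℂ) - Complex.I * (Z : ℂ)) / (s : ℂ) := by
    rw [hζ]
    field_simp
    push_cast
    linear_combination (-t : ℂ) * Complex.I_sq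
  have hz : (1 + Complex.I * ζ) / (1 - Complex.I * ζ) =
      ((((s - t : ℝ) : ℂ) + Complex.I * (Z : ℂ))) / ((((s + t : ℝ) : ℂ) - Complex.I * (Z : ℂ))) := by
    rw [hNval, hDval, div_div_div_comm, div_self hsC, div_one]
  unfold arctanC
  rw [hN, hD, ← inv_div, hz]
  set a : ℂ := ((s - t : ℝ) : ℂ) + Complex.I * (Z : ℂ) with ha
  set b : ℂ := ((s + t : ℝ) : ℂ) - Complex.I * (Z : ℂ) with hb
  by_cases hb0 : b = 0
  · rw [hb0, div_zero, inv_zero, Complex.log_zero, mul_zero, neg_zero]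
  by_cases ha0 : a = 0
  · rw [ha0, zero_div, inv_zero, Complex.log_zero, mul_zero, neg_zero]
  have harg : (a / b).arg ≠ Real.pi := by
    have hare : a.re = s - t := by simp [ha]
    have haim : a.im = Z := by simp [ha]
    have hbre : b.re = s + t := by simp [hb]
    have hbim : b.im = -Z := by simp [hb]
    rcases hc with hZ | ht
    · have hnormb : 0 < Complex.normSq b := by
        rw [Complex.normSq_pos]; exact hb0
      have him : (a / b).im = 2 * s * Z / Complex.normSq b := by
        rw [Complex.div_im, hare, haim, hbre, hbim]
        field_simp
        ring
      intro hpi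
      have him0 := (Complex.arg_eq_pi_iff.mp hpi).2
      rw [him] at him0
      have h2sZ : 2 * s * Z ≠ 0 := by positivity
      rcases div_eq_zero_iff.mp him0 with h' | h'
      · exact h2sZ h'
      · exact (ne_of_gt hnormb) h'
    · -- Z = 0 case is only needed when Z ≠ 0 fails, but we don't have Z = 0 here;
      -- we argue from t^2 ≤ s^2 and a ≠ 0, b ≠ 0
      by_cases hZ0 : Z = 0
      · subst hZ0
        have hab : a = ((s - t : ℝ) : ℂ) := by simp [ha]
        have hbb : b = ((s + t : ℝ) : ℂ) := by simp [hb]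
        have hst1 : s - t ≠ 0 := by
          intro hzero; apply ha0; rw [hab, hzero]; simp
        have hst2 : s + t ≠ 0 := by
          intro hzero; apply hb0; rw [hbb, hzero]; simp
        have hts1 : t ≤ s := by nlinarith [ht]
        have hts2 : -s ≤ t := by nlinarith [ht]
        have h1 : 0 < s - t := lt_of_le_of_ne (by linarith) (Ne.symm hst1)
        have h2 : 0 < s + t := lt_of_le_of_ne (by linarith) (Ne.symm hst2)
        rw [hab, hbb, ← Complex.ofReal_div]
        rw [Complex.arg_ofReal_of_nonneg (by positivity)]
        exact Real.pi_ne_zero.symm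
      · -- Z ≠ 0, same as first case
        have hnormb : 0 < Complex.normSq b := by
          rw [Complex.normSq_pos]; exact hb0
        have him : (a / b).im = 2 * s * Z / Complex.normSq b := by
          rw [Complex.div_im, hare, haim, hbre, hbim]
          field_simp
          ring
        intro hpi
        have him0 := (Complex.arg_eq_pi_iff.mp hpi).2
        rw [him] at him0
        have h2sZ : 2 * s * Z ≠ 0 :=
          mul_ne_zero (by positivity) hZ0
        rcases div_eq_zero_iff.mp him0 with h' | h'
        · exact h2sZ h'
        · exact (ne_of_gt hnormb) h'
  rw [Complex.log_inv _ harg]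
  ring

lemma G_odd (κ Z t q : ℝ) (hq : 0 < q) (hc : Z ≠ 0 ∨ t^2 ≤ q) :
    G κ (-Z) (-t) q = -G κ Z t q := by
  have hs : 0 < Real.sqrt q := Real.sqrt_pos.mpr hq
  have hs2 : Real.sqrt q ^ 2 = q := Real.sq_sqrt hq.le
  have hc' : Z ≠ 0 ∨ t^2 ≤ Real.sqrt q ^ 2 := by rwa [hs2]
  have hu : (((-Z : ℝ) : ℂ) + Complex.I * ((-t : ℝ) : ℂ)) =
      -(((Z : ℝ) : ℂ) + Complex.I * ((t : ℝ) : ℂ)) := by push_cast; ring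
  unfold G
  rw [hu, neg_div ((Real.sqrt q : ℝ) : ℂ) (((Z : ℝ) : ℂ) + Complex.I * ((t : ℝ) : ℂ)),
    arctanC_neg Z t (Real.sqrt q) hs hc']
  ring

end Aux

theorem stmt_3 (ε κ : ℝ) (hε : ε ∈ Set.Ioo (-1:ℝ) 1) (X Y Z : ℝ)
    (h : (X, Y, Z) ∉ closure (Winf ε)) :
    phi ε κ (-X, Y, Z) = phi ε κ (X, Y, Z) ∧
    phi ε κ (X, -Y, Z) = phi ε κ (X, Y, Z) ∧
    phi ε κ (X, Y, -Z) = -phi ε κ (X, Y, Z) := by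
  obtain ⟨hε1, hε2⟩ := hε
  have hA : (0:ℝ) < 1 + ε := by linarith
  have hB : (0:ℝ) < 1 - ε := by linarith
  -- From the hypothesis, Z ≠ 0 or the point is inside / on the ellipse.
  have hZsum : Z ≠ 0 ∨ X^2/(1+ε) + Y^2/(1-ε) ≤ 1 := by
    by_contra hcon
    push_neg at hcon
    exact h (subset_closure ⟨hcon.1, hcon.2⟩)
  -- positivity of Q
  have hq : ∀ θ : ℝ, 0 < 1 + ε * Real.cos (2*θ) := by
    intro θ
    nlinarith [sq_nonneg (ε + Real.cos (2*θ)), Real.cos_sq_le_one (2*θ),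
      mul_pos hA hB]
  -- Cauchy–Schwarz bound
  have htle : ∀ θ : ℝ, Z ≠ 0 ∨ (X * Real.cos θ + Y * Real.sin θ)^2 ≤ 1 + ε * Real.cos (2*θ) := by
    intro θ
    rcases hZsum with hZ | hsum
    · exact Or.inl hZ
    · right
      have hpy : Real.sin θ ^ 2 + Real.cos θ ^ 2 = 1 := Real.sin_sq_add_cos_sq θ
      have hsum' : X^2 * (1-ε) + Y^2 * (1+ε) ≤ (1+ε) * (1-ε) := by
        rw [div_add_div _ _ (ne_of_gt hA) (ne_of_gt hB), div_le_one (mul_pos hA hB)] at hsum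
        linarith [hsum]
      have hc2 : Real.cos (2*θ) = 2 * Real.cos θ ^ 2 - 1 := Real.cos_two_mul θ
      have hqpos : (0:ℝ) ≤ (1+ε) * Real.cos θ ^ 2 + (1-ε) * Real.sin θ ^ 2 := by positivity
      have hqe : 1 + ε * Real.cos (2*θ) =
          (1+ε) * Real.cos θ ^ 2 + (1-ε) * Real.sin θ ^ 2 := by
        rw [hc2]; linear_combination (ε - 1) * hpy
      have hkey : (1+ε) * (1-ε) * ((X * Real.cos θ + Y * Real.sin θ)^2) ≤
          (1+ε) * (1-ε) * ((1+ε) * Real.cos θ ^ 2 + (1-ε) * Real.sin θ ^ 2) := by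
        nlinarith [sq_nonneg (X * (1-ε) * Real.sin θ - Y * (1+ε) * Real.cos θ),
          mul_le_mul_of_nonneg_right hsum' hqpos]
      rw [hqe]
      exact le_of_mul_le_mul_left (by linarith [hkey]) (mul_pos hA hB)
  -- pointwise identities
  set f : ℝ → ℂ := fun θ => Fint ε κ (X, Y, Z) θ with hf
  have h1 : ∀ θ : ℝ, Fint ε κ (-X, Y, Z) θ = f (Real.pi - θ) := by
    intro θ
    simp only [hf]
    rw [Fint_eq, Fint_eq]
    have ht : X * Real.cos (Real.pi - θ) + Y * Real.sin (Real.pi - θ) =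
        -X * Real.cos θ + Y * Real.sin θ := by
      rw [Real.cos_pi_sub, Real.sin_pi_sub]; ring
    have hq' : 1 + ε * Real.cos (2*(Real.pi - θ)) = 1 + ε * Real.cos (2*θ) := by
      rw [show 2*(Real.pi - θ) = 2*Real.pi - 2*θ by ring, Real.cos_sub]
      simp [Real.cos_two_pi, Real.sin_two_pi]
    rw [ht, hq']
  have h2 : ∀ θ : ℝ, Fint ε κ (X, -Y, Z) θ = f (-θ) := by
    intro θ
    simp only [hf]
    rw [Fint_eq, Fint_eq]
    have ht : X * Real.cos (-θ) + Y * Real.sin (-θ) = X * Real.cos θ + (-Y) * Real.sin θ := by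
      rw [Real.cos_neg, Real.sin_neg]; ring
    have hq' : 1 + ε * Real.cos (2*(-θ)) = 1 + ε * Real.cos (2*θ) := by
      rw [show 2*(-θ) = -(2*θ) by ring, Real.cos_neg]
    rw [ht, hq']
  have h3 : ∀ θ : ℝ, Fint ε κ (X, Y, -Z) θ = -f (θ + Real.pi) := by
    intro θ
    simp only [hf]
    rw [Fint_eq, Fint_eq]
    have ht : X * Real.cos (θ + Real.pi) + Y * Real.sin (θ + Real.pi) =
        -(X * Real.cos θ + Y * Real.sin θ) := by
      rw [Real.cos_add_pi, Real.sin_add_pi]; ring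
    have hq' : 1 + ε * Real.cos (2*(θ + Real.pi)) = 1 + ε * Real.cos (2*θ) := by
      rw [show 2*(θ + Real.pi) = 2*θ + 2*Real.pi by ring, Real.cos_add_two_pi]
    rw [ht, hq']
    have := G_odd κ Z (-(X * Real.cos θ + Y * Real.sin θ)) (1 + ε * Real.cos (2*θ)) (hq θ) ?_
    · rw [neg_neg] at this
      rw [← this]
    · rcases htle θ with hZ | hle
      · exact Or.inl hZ
      · right; rw [neg_pow]; simpa using hle
  -- periodicity
  have hper : Function.Periodic f (2*Real.pi) := by
    intro θ
    simp only [hf]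
    rw [Fint_eq, Fint_eq]
    have ht : X * Real.cos (θ + 2*Real.pi) + Y * Real.sin (θ + 2*Real.pi) =
        X * Real.cos θ + Y * Real.sin θ := by
      rw [Real.cos_add_two_pi, Real.sin_add_two_pi]
    have hq' : 1 + ε * Real.cos (2*(θ + 2*Real.pi)) = 1 + ε * Real.cos (2*θ) := by
      rw [show 2*(θ + 2*Real.pi) = 2*θ + 2*Real.pi + 2*Real.pi by ring,
        Real.cos_add_two_pi, Real.cos_add_two_pi]
    rw [ht, hq']
  -- integral identities
  have hint1 : (∫ θ in (0:ℝ)..(2*Real.pi), Fint ε κ (-X, Y, Z) θ) =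
      ∫ θ in (0:ℝ)..(2*Real.pi), f θ := by
    rw [intervalIntegral.integral_congr (g := fun θ => f (Real.pi - θ))
      (fun θ _ => h1 θ)]
    rw [intervalIntegral.integral_comp_sub_left f Real.pi]
    have := hper.intervalIntegral_add_eq (Real.pi - 2*Real.pi) 0
    rw [show Real.pi - 2*Real.pi + 2*Real.pi = Real.pi - 0 by ring, zero_add] at this
    exact this
  have hint2 : (∫ θ in (0:ℝ)..(2*Real.pi), Fint ε κ (X, -Y, Z) θ) =
      ∫ θ in (0:ℝ)..(2*Real.pi), f θ := by
    rw [intervalIntegral.integral_congr (g := fun θ => f (-θ)) (fun θ _ => h2 θ)]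
    rw [intervalIntegral.integral_comp_neg f, neg_zero]
    have := hper.intervalIntegral_add_eq (-(2*Real.pi)) 0
    rw [show -(2*Real.pi) + 2*Real.pi = (0:ℝ) by ring, zero_add] at this
    exact this
  have hint3 : (∫ θ in (0:ℝ)..(2*Real.pi), Fint ε κ (X, Y, -Z) θ) =
      -∫ θ in (0:ℝ)..(2*Real.pi), f θ := by
    rw [intervalIntegral.integral_congr (g := fun θ => -f (θ + Real.pi)) (fun θ _ => h3 θ)]
    rw [intervalIntegral.integral_neg]
    rw [intervalIntegral.integral_comp_add_right f Real.pi]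
    have := hper.intervalIntegral_add_eq Real.pi 0
    rw [zero_add] at this
    rw [show (0:ℝ) + Real.pi = Real.pi by ring]
    rw [show Real.pi + 2*Real.pi = 2*Real.pi + Real.pi by ring] at this
    rw [this]
  refine ⟨?_, ?_, ?_⟩
  · unfold phi; rw [hint1]
  · unfold phi; rw [hint2]
  · unfold phi; rw [hint3]; ring
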